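/- Let k ≥ 1, let a > 0, and let F : ℝ^k → ℝ be interchangeable (i.e., F(μ_{σ(1)},…,μ_{σ(k)}) = F(μ_1,…,μ_k) for every permutation σ of {1,…,k}) and twice continuously differentiable on a neighborhood of the diagonal point a·𝟙 = (a,…,a). Then there exist constants C > 0 and δ > 0 such that for every μ ∈ ℝ^k with μ_i > 0 for all i and ‖μ − a·𝟙‖ < δ, |F(μ) − F(μ_H·𝟙)| ≤ C‖μ − μ̄_A·𝟙‖², where μ_H = k/(∑_{i=1}^k 1/μ_i) is the harmonic mean and μ̄_A = (1/k)∑_{i=1}^k μ_i is the arithmetic mean of the coordinates of μ. -/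

import Mathlib

/-!
At a diagonal point `c·𝟙` the derivative of a symmetric `F` is a multiple of `w ↦ ∑ wᵢ`, so it
vanishes on `μ - μ̄_A·𝟙`. A first-order Taylor estimate with Lipschitz derivative therefore gives
`|F μ - F(μ̄_A·𝟙)| ≤ K‖μ - μ̄_A·𝟙‖²`. Moving from `μ̄_A·𝟙` to `μ_H·𝟙` costs `K (μ̄_A - μ_H)`, and
the identity `μ̄_A ∑ 1/μᵢ - k = ∑ (μᵢ - μ̄_A)² / (μ̄_A μᵢ)` shows that `μ̄_A - μ_H` is itself
quadratic in `‖μ - μ̄_A·𝟙‖` as long as the `μᵢ` stay away from `0`.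
-/

open Topology Metric Finset NNReal

section Calculus

variable {E G : Type*} [NormedAddCommGroup E] [NormedSpace ℝ E]
  [NormedAddCommGroup G] [NormedSpace ℝ G]

theorem Convex.norm_image_sub_sub_fderiv_le {f : E → G} {s : Set E} {K : ℝ≥0}
    (hs : Convex ℝ s) (hf : ∀ x ∈ s, DifferentiableAt ℝ f x)
    (hlip : LipschitzOnWith K (fderiv ℝ f) s) {x y : E} (hx : x ∈ s) (hy : y ∈ s) :
    ‖f y - f x - fderiv ℝ f x (y - x)‖ ≤ K * ‖y - x‖ ^ 2 := by
  have hseg : segment ℝ x y ⊆ s := hs.segment_subset hx hy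
  have bound : ∀ z ∈ segment ℝ x y, ‖fderiv ℝ f z - fderiv ℝ f x‖ ≤ K * ‖y - x‖ := by
    intro z hz
    calc ‖fderiv ℝ f z - fderiv ℝ f x‖ ≤ K * ‖z - x‖ := by
          simpa only [dist_eq_norm] using hlip.dist_le_mul z (hseg hz) x hx
      _ ≤ K * ‖y - x‖ := by gcongr; exact norm_sub_le_of_mem_segment hz
  calc ‖f y - f x - fderiv ℝ f x (y - x)‖ ≤ K * ‖y - x‖ * ‖y - x‖ :=
        (convex_segment x y).norm_image_sub_le_of_norm_fderiv_le' (fun z hz => hf z (hseg hz))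
          bound (left_mem_segment ℝ x y) (right_mem_segment ℝ x y)
    _ = K * ‖y - x‖ ^ 2 := by ring

theorem ContDiffAt.exists_ball_lipschitzOnWith_fderiv {f : E → G} {x : E}
    (hf : ContDiffAt ℝ 2 f x) :
    ∃ K : ℝ≥0, ∃ ε > 0, (∀ y ∈ ball x ε, DifferentiableAt ℝ f y) ∧
      LipschitzOnWith K f (ball x ε) ∧ LipschitzOnWith K (fderiv ℝ f) (ball x ε) := by
  obtain ⟨K₀, t₀, ht₀, hf₀⟩ := (hf.of_le (by norm_num)).exists_lipschitzOnWith
  obtain ⟨K₁, t₁, ht₁, hf₁⟩ := (hf.fderiv_right (m := 1) (by norm_num)).exists_lipschitzOnWith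
  have hdiff : ∀ᶠ y in 𝓝 x, DifferentiableAt ℝ f y :=
    (hf.eventually (by simp)).mono fun y hy => hy.differentiableAt (by norm_num)
  obtain ⟨ε, hε, hball⟩ :=
    Metric.mem_nhds_iff.1 (Filter.inter_mem (Filter.inter_mem ht₀ ht₁) hdiff)
  refine ⟨max K₀ K₁, ε, hε, fun y hy => (hball hy).2, ?_, ?_⟩
  · exact (hf₀.mono fun y hy => (hball hy).1.1).weaken (le_max_left _ _)
  · exact (hf₁.mono fun y hy => (hball hy).1.2).weaken (le_max_right _ _)

end Calculus

section Symmetric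

variable {ι G : Type*} [Fintype ι] [NormedAddCommGroup G] [NormedSpace ℝ G]

theorem fderiv_const_apply_comp_perm {F : (ι → ℝ) → G} {σ : Equiv.Perm ι}
    (hσ : ∀ μ, F (μ ∘ σ) = F μ) {c : ℝ} (hd : DifferentiableAt ℝ F fun _ => c) (v : ι → ℝ) :
    fderiv ℝ F (fun _ => c) (v ∘ σ) = fderiv ℝ F (fun _ => c) v := by
  let L : (ι → ℝ) →L[ℝ] (ι → ℝ) := (LinearMap.funLeft ℝ ℝ σ).toContinuousLinearMap
  have hFL : F ∘ L = F := funext hσ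
  have hLc : L (fun _ => c) = fun _ => c := rfl
  have hchain := fderiv_comp (fun _ => c) (hLc ▸ hd) L.differentiableAt
  rw [hFL, hLc, L.fderiv] at hchain
  exact (DFunLike.congr_fun hchain v).symm

theorem fderiv_const_apply_eq_zero_of_sum_eq_zero {F : (ι → ℝ) → G}
    (hsym : ∀ (σ : Equiv.Perm ι) μ, F (μ ∘ σ) = F μ) {c : ℝ}
    (hd : DifferentiableAt ℝ F fun _ => c) {w : ι → ℝ} (hw : ∑ i, w i = 0) :
    fderiv ℝ F (fun _ => c) w = 0 := by
  classical
  set D := fderiv ℝ F fun _ => c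
  rcases isEmpty_or_nonempty ι with hι | ⟨⟨i₀⟩⟩
  · rw [Subsingleton.elim w 0, map_zero]
  have hbasis : ∀ i, D (Pi.single i 1) = D (Pi.single i₀ 1) := fun i => by
    rw [← fderiv_const_apply_comp_perm (hsym (Equiv.swap i i₀)) hd, Pi.single_comp_equiv,
      Equiv.symm_swap, Equiv.swap_apply_left]
  calc D w = ∑ i, w i • D (Pi.single i 1) := by
        conv_lhs => rw [← Finset.univ_sum_single w]
        refine (map_sum D _ _).trans (Finset.sum_congr rfl fun i _ => ?_)
        rw [← map_smul, ← Pi.single_smul', smul_eq_mul, mul_one]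
    _ = (∑ i, w i) • D (Pi.single i₀ 1) := by simp only [hbasis, Finset.sum_smul]
    _ = 0 := by rw [hw, zero_smul]

end Symmetric

section Means

variable {ι : Type*} [Fintype ι]

noncomputable def arithMean (μ : ι → ℝ) : ℝ := (∑ i, μ i) / Fintype.card ι

noncomputable def harmMean (μ : ι → ℝ) : ℝ := Fintype.card ι / ∑ i, 1 / μ i

theorem sub_norm_sub_const_le_apply (μ : ι → ℝ) (a : ℝ) (i : ι) :
    a - ‖μ - fun _ => a‖ ≤ μ i := by
  have h := norm_le_pi_norm (μ - fun _ => a) i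
  rw [Pi.sub_apply, Real.norm_eq_abs] at h
  linarith [neg_abs_le (μ i - a)]

variable [Nonempty ι] {μ : ι → ℝ}

theorem arithMean_pos (hμ : ∀ i, 0 < μ i) : 0 < arithMean μ :=
  div_pos (sum_pos (fun i _ => hμ i) univ_nonempty) (by exact_mod_cast Fintype.card_pos)

theorem sum_sub_arithMean : ∑ i, (μ i - arithMean μ) = 0 := by
  rw [sum_sub_distrib, sum_const, card_univ, nsmul_eq_mul, arithMean]
  field_simp
  ring

theorem abs_arithMean_sub_le_norm (a : ℝ) : |arithMean μ - a| ≤ ‖μ - fun _ => a‖ := by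
  have hn : (0 : ℝ) < Fintype.card ι := by exact_mod_cast Fintype.card_pos
  have hsum : arithMean μ - a = (∑ i, (μ i - a)) / Fintype.card ι := by
    rw [sum_sub_distrib, sum_const, card_univ, nsmul_eq_mul, arithMean]
    field_simp
  rw [hsum, abs_div, abs_of_pos hn, div_le_iff₀ hn]
  calc |∑ i, (μ i - a)| ≤ ∑ i, |μ i - a| := abs_sum_le_sum_abs _ _
    _ ≤ ∑ _i : ι, ‖μ - fun _ => a‖ := sum_le_sum fun i _ => norm_le_pi_norm (μ - fun _ => a) i
    _ = ‖μ - fun _ => a‖ * Fintype.card ι := by rw [sum_const, card_univ, nsmul_eq_mul, mul_comm]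

theorem sum_sq_div_eq_arithMean_mul_sum_inv_sub (hμ : ∀ i, 0 < μ i) :
    ∑ i, (μ i - arithMean μ) ^ 2 / (arithMean μ * μ i) =
      arithMean μ * ∑ i, 1 / μ i - Fintype.card ι := by
  have hA := arithMean_pos hμ
  have hterm : ∀ i, (μ i - arithMean μ) ^ 2 / (arithMean μ * μ i) =
      arithMean μ * (1 / μ i) - 1 + (μ i - arithMean μ) / arithMean μ := fun i => by
    field_simp [(hμ i).ne']
    ring
  rw [sum_congr rfl fun i _ => hterm i, sum_add_distrib, sum_sub_distrib, ← mul_sum, ← sum_div,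
    sum_sub_arithMean, zero_div, add_zero, sum_const, card_univ, nsmul_eq_mul, mul_one]

theorem harmMean_le_arithMean (hμ : ∀ i, 0 < μ i) : harmMean μ ≤ arithMean μ := by
  have hS : 0 < ∑ i, 1 / μ i := sum_pos (fun i _ => one_div_pos.2 (hμ i)) univ_nonempty
  have hA := arithMean_pos hμ
  have hid := sum_sq_div_eq_arithMean_mul_sum_inv_sub hμ
  have hsq : 0 ≤ ∑ i, (μ i - arithMean μ) ^ 2 / (arithMean μ * μ i) :=
    sum_nonneg fun i _ => div_nonneg (sq_nonneg _) (mul_pos hA (hμ i)).le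
  rw [harmMean, div_le_iff₀ hS]
  linarith

theorem le_harmMean {m : ℝ} (hm : 0 < m) (hμ : ∀ i, m ≤ μ i) : m ≤ harmMean μ := by
  have hS : 0 < ∑ i, 1 / μ i :=
    sum_pos (fun i _ => one_div_pos.2 (hm.trans_le (hμ i))) univ_nonempty
  rw [harmMean, le_div_iff₀ hS]
  calc m * ∑ i, 1 / μ i ≤ m * ∑ _i : ι, 1 / m := by gcongr with i; exact hμ i
    _ = Fintype.card ι := by rw [sum_const, card_univ, nsmul_eq_mul]; field_simp

theorem abs_harmMean_sub_le_norm {a : ℝ} (h : ‖μ - fun _ => a‖ < a) :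
    |harmMean μ - a| ≤ ‖μ - fun _ => a‖ := by
  have hm : 0 < a - ‖μ - fun _ => a‖ := sub_pos.2 h
  have hlow := le_harmMean hm (sub_norm_sub_const_le_apply μ a)
  have hHA := harmMean_le_arithMean fun i => hm.trans_le (sub_norm_sub_const_le_apply μ a i)
  have hA := abs_le.1 (abs_arithMean_sub_le_norm (μ := μ) a)
  exact abs_le.2 ⟨by linarith, by linarith⟩

theorem arithMean_sub_harmMean_le {m : ℝ} (hm : 0 < m) (hμ : ∀ i, m ≤ μ i) :
    arithMean μ - harmMean μ ≤ ‖μ - fun _ => arithMean μ‖ ^ 2 / m := by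
  have hpos : ∀ i, 0 < μ i := fun i => hm.trans_le (hμ i)
  have hn : (0 : ℝ) < Fintype.card ι := by exact_mod_cast Fintype.card_pos
  have hS : 0 < ∑ i, 1 / μ i := sum_pos (fun i _ => one_div_pos.2 (hpos i)) univ_nonempty
  have hA := arithMean_pos hpos
  set A := arithMean μ
  set D := ‖μ - fun _ => A‖
  set T := ∑ i, (μ i - A) ^ 2 / (A * μ i) with hT
  have hT_le : T ≤ Fintype.card ι * (D ^ 2 / (A * m)) := by
    rw [← nsmul_eq_mul, ← card_univ, ← sum_const]
    refine sum_le_sum fun i _ =>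
      div_le_div₀ (by positivity) ?_ (by positivity) (by gcongr; exact hμ i)
    have hi := abs_le.1 (norm_le_pi_norm (μ - fun _ => A) i)
    exact sq_le_sq' hi.1 hi.2
  calc A - harmMean μ = T * (harmMean μ / Fintype.card ι) := by
        rw [hT, sum_sq_div_eq_arithMean_mul_sum_inv_sub hpos, harmMean]
        field_simp
        ring
    _ ≤ Fintype.card ι * (D ^ 2 / (A * m)) * (A / Fintype.card ι) := by
        gcongr
        · exact div_nonneg (hm.le.trans (le_harmMean hm hμ)) hn.le
        · exact harmMean_le_arithMean hpos
    _ = D ^ 2 / m := by field_simp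

theorem norm_sub_arithMean_le_of_lipschitzOnWith_fderiv {G : Type*} [NormedAddCommGroup G]
    [NormedSpace ℝ G] {F : (ι → ℝ) → G} (hsym : ∀ (σ : Equiv.Perm ι) μ, F (μ ∘ σ) = F μ)
    {s : Set (ι → ℝ)} {K : ℝ≥0} (hs : Convex ℝ s) (hd : ∀ x ∈ s, DifferentiableAt ℝ F x)
    (hlip : LipschitzOnWith K (fderiv ℝ F) s) (hμ : μ ∈ s) (hA : (fun _ => arithMean μ) ∈ s) :
    ‖F μ - F (fun _ => arithMean μ)‖ ≤ K * ‖μ - fun _ => arithMean μ‖ ^ 2 := by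
  have hcrit : fderiv ℝ F (fun _ => arithMean μ) (μ - fun _ => arithMean μ) = 0 :=
    fderiv_const_apply_eq_zero_of_sum_eq_zero hsym (hd _ hA) sum_sub_arithMean
  simpa [hcrit] using hs.norm_image_sub_sub_fderiv_le hd hlip hA hμ

end Means

/-- **Corollary 2 of the paper (harmonic mean version)**: the Averaging Principle remains
valid when the arithmetic mean is replaced with the harmonic mean. -/
theorem averaging_principle_harmonic (k : ℕ) (hk : 1 ≤ k) (a : ℝ) (ha : 0 < a)
    (F : (Fin k → ℝ) → ℝ)
    (hsym : ∀ (σ : Equiv.Perm (Fin k)) (μ : Fin k → ℝ), F (μ ∘ σ) = F μ)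
    (hF : ContDiffAt ℝ 2 F (fun _ => a)) :
    ∃ C > (0:ℝ), ∃ δ > (0:ℝ), ∀ μ : Fin k → ℝ,
      (∀ i, 0 < μ i) → ‖μ - (fun _ => a)‖ < δ →
      |F μ - F (fun _ => (k : ℝ) / (∑ i, 1 / μ i))| ≤
        C * ‖μ - (fun _ => (∑ i, μ i) / k)‖ ^ 2 := by
  have : Nonempty (Fin k) := ⟨⟨0, hk⟩⟩
  obtain ⟨K, ε, hε, hd, hlipF, hlipDF⟩ := hF.exists_ball_lipschitzOnWith_fderiv
  refine ⟨K * (1 + 2 / a) + 1, by positivity, min ε (a / 2), by positivity, fun μ hpos hμ => ?_⟩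
  rw [show (k : ℝ) = Fintype.card (Fin k) by simp]
  change |F μ - F (fun _ => harmMean μ)| ≤ _ * ‖μ - fun _ => arithMean μ‖ ^ 2
  have hμε : ‖μ - fun _ => a‖ < ε := hμ.trans_le (min_le_left _ _)
  have hμa : ‖μ - fun _ => a‖ < a / 2 := hμ.trans_le (min_le_right _ _)
  have hmem : ∀ c, |c - a| < ε → (fun _ => c) ∈ ball (fun _ : Fin k => a) ε := fun c hc => by
    rwa [mem_ball, dist_pi_const, Real.dist_eq]
  have hA := hmem _ ((abs_arithMean_sub_le_norm a).trans_lt hμε)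
  have hH := hmem _ ((abs_harmMean_sub_le_norm (by linarith)).trans_lt hμε)
  have htaylor := norm_sub_arithMean_le_of_lipschitzOnWith_fderiv hsym (convex_ball _ _) hd
    hlipDF (mem_ball_iff_norm.2 hμε) hA
  have hlip := hlipF.dist_le_mul _ hA _ hH
  rw [dist_pi_const, Real.dist_eq, Real.dist_eq,
    abs_of_nonneg (sub_nonneg.2 (harmMean_le_arithMean hpos))] at hlip
  have hAH := arithMean_sub_harmMean_le (μ := μ) (m := a / 2) (by positivity)
    fun i => by linarith [sub_norm_sub_const_le_apply μ a i]
  rw [Real.norm_eq_abs] at htaylor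
  calc |F μ - F (fun _ => harmMean μ)|
      ≤ |F μ - F (fun _ => arithMean μ)| + |F (fun _ => arithMean μ) - F (fun _ => harmMean μ)| :=
        abs_sub_le _ _ _
    _ ≤ K * ‖μ - fun _ => arithMean μ‖ ^ 2 + K * (‖μ - fun _ => arithMean μ‖ ^ 2 / (a / 2)) :=
        add_le_add htaylor (hlip.trans (by gcongr))
    _ = K * (1 + 2 / a) * ‖μ - fun _ => arithMean μ‖ ^ 2 := by field_simp
    _ ≤ (K * (1 + 2 / a) + 1) * ‖μ - fun _ => arithMean μ‖ ^ 2 := by gcongr; simp
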